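/- Centered Cauchy–Riemann relations: with u the Poisson extension of f ∈ ℓ²(ℤ), v = P_y(𝓗f) the Poisson extension of the centered discrete Hilbert transform 𝓗f = (𝓗⁺f + 𝓗⁻f)/2, and ∂⁰_x = (∂⁺_x + ∂⁻_x)/2 the centered difference, one has on (0,∞) × ℤ: ∂_y v = −∂⁰_x u and ∂⁰_x v = ((1/4)S_{−1} + (1/2)Id + (1/4)S_{+1}) ∂_y u, the shifts acting in the ℤ-variable. -/

import Mathlib

open scoped Real
open MeasureTheory

noncomputable section

/-- Discrete Fourier transform of a sequence. -/
def dft (f : ℤ → ℂ) (ξ : ℝ) : ℂ :=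
  ∑' x : ℤ, f x * Complex.exp (-(2 * (π : ℂ) * Complex.I * (x : ℂ) * (ξ : ℂ)))

/-- Symbol `m⁺(ξ) = i e^{iπξ} sin(πξ)/|sin(πξ)|` of `𝓗⁺`. -/
def mplus (ξ : ℝ) : ℂ :=
  Complex.I * Complex.exp ((π : ℂ) * (ξ : ℂ) * Complex.I) *
    ((Real.sin (π * ξ) / |Real.sin (π * ξ)| : ℝ) : ℂ)

/-- Symbol `m⁻(ξ) = i e^{-iπξ} sin(πξ)/|sin(πξ)|` of `𝓗⁻`. -/
def mminus (ξ : ℝ) : ℂ :=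
  Complex.I * Complex.exp (-((π : ℂ) * (ξ : ℂ) * Complex.I)) *
    ((Real.sin (π * ξ) / |Real.sin (π * ξ)| : ℝ) : ℂ)

/-- The semidiscrete Poisson extension `u(y,x) = (P_y f)(x)`, where `P_y = e^{-yA}`
and `A = √(-Δ)` is the Fourier multiplier `2|sin(πξ)|`. -/
def poisson (f : ℤ → ℂ) (y : ℝ) (x : ℤ) : ℂ :=
  ∫ ξ in (-(1:ℝ)/2)..(1/2),
    dft f ξ * Complex.exp (((-(2 * |Real.sin (π * ξ)| * y)) : ℝ) : ℂ) *
      Complex.exp (2 * (π : ℂ) * Complex.I * (x : ℂ) * (ξ : ℂ))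

/-- `v⁺(y,x)`: the Poisson extension of `𝓗⁺f` (multiplier form). -/
def vplus (f : ℤ → ℂ) (y : ℝ) (x : ℤ) : ℂ :=
  ∫ ξ in (-(1:ℝ)/2)..(1/2),
    mplus ξ * dft f ξ * Complex.exp (((-(2 * |Real.sin (π * ξ)| * y)) : ℝ) : ℂ) *
      Complex.exp (2 * (π : ℂ) * Complex.I * (x : ℂ) * (ξ : ℂ))

/-- `v⁻(y,x)`: the Poisson extension of `𝓗⁻f` (multiplier form). -/
def vminus (f : ℤ → ℂ) (y : ℝ) (x : ℤ) : ℂ :=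
  ∫ ξ in (-(1:ℝ)/2)..(1/2),
    mminus ξ * dft f ξ * Complex.exp (((-(2 * |Real.sin (π * ξ)| * y)) : ℝ) : ℂ) *
      Complex.exp (2 * (π : ℂ) * Complex.I * (x : ℂ) * (ξ : ℂ))

/-- `v(y,x)`: the Poisson extension of the centered discrete Hilbert transform
`𝓗f = (𝓗⁺f + 𝓗⁻f)/2`. -/
def vcent (f : ℤ → ℂ) (y : ℝ) (x : ℤ) : ℂ := (vplus f y x + vminus f y x) / 2

/-!  Auxiliary machinery. -/

/-- The character `e^{2πi x ξ}`. -/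
def Ex (x : ℤ) (ξ : ℝ) : ℂ :=
  Complex.exp (2 * (π : ℂ) * Complex.I * (x : ℂ) * (ξ : ℂ))

lemma continuous_Ex (x : ℤ) : Continuous (Ex x) := by
  unfold Ex; fun_prop

lemma norm_Ex (x : ℤ) (ξ : ℝ) : ‖Ex x ξ‖ = 1 := by
  have h : 2 * (π : ℂ) * Complex.I * (x : ℂ) * (ξ : ℂ)
      = ((2 * π * (x : ℝ) * ξ : ℝ) : ℂ) * Complex.I := by push_cast; ring
  rw [Ex, h, Complex.norm_exp_ofReal_mul_I]

lemma continuous_dft (f : ℤ → ℂ) (hf : Summable fun x => ‖f x‖) :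
    Continuous (dft f) := by
  refine continuous_tsum (fun x => ?_) hf (fun x ξ => ?_)
  · fun_prop
  · have h : -(2 * (π : ℂ) * Complex.I * (x : ℂ) * (ξ : ℂ))
        = ((-(2 * π * (x : ℝ) * ξ) : ℝ) : ℂ) * Complex.I := by push_cast; ring
    rw [norm_mul, h,
      Complex.norm_exp_ofReal_mul_I, mul_one]

lemma norm_dft_le (f : ℤ → ℂ) (hf : Summable fun x => ‖f x‖) (ξ : ℝ) :
    ‖dft f ξ‖ ≤ ∑' x : ℤ, ‖f x‖ := by
  have heq : (fun x : ℤ =>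
      ‖f x * Complex.exp (-(2 * (π : ℂ) * Complex.I * (x : ℂ) * (ξ : ℂ)))‖)
      = fun x : ℤ => ‖f x‖ := by
    funext x
    have h : -(2 * (π : ℂ) * Complex.I * (x : ℂ) * (ξ : ℂ))
        = ((-(2 * π * (x : ℝ) * ξ) : ℝ) : ℂ) * Complex.I := by push_cast; ring
    rw [norm_mul, h,
      Complex.norm_exp_ofReal_mul_I, mul_one]
  calc ‖dft f ξ‖ ≤ ∑' x : ℤ,
        ‖f x * Complex.exp (-(2 * (π : ℂ) * Complex.I * (x : ℂ) * (ξ : ℂ)))‖ :=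
        norm_tsum_le_tsum_norm (by rw [heq]; exact hf)
    _ = ∑' x : ℤ, ‖f x‖ := by rw [heq]

lemma measurable_mplus : Measurable mplus := by
  unfold mplus; fun_prop

lemma measurable_mminus : Measurable mminus := by
  unfold mminus; fun_prop

lemma norm_sigma_le (ξ : ℝ) :
    ‖((Real.sin (π * ξ) / |Real.sin (π * ξ)| : ℝ) : ℂ)‖ ≤ 1 := by
  rw [Complex.norm_real, Real.norm_eq_abs, abs_div, abs_abs]
  rcases eq_or_ne (Real.sin (π * ξ)) 0 with h | h
  · simp [h]
  · rw [div_self (abs_ne_zero.2 h)]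

lemma norm_mplus_le (ξ : ℝ) : ‖mplus ξ‖ ≤ 1 := by
  have h : (π : ℂ) * (ξ : ℂ) * Complex.I = ((π * ξ : ℝ) : ℂ) * Complex.I := by
    push_cast; ring
  rw [mplus, norm_mul, norm_mul, h,
    Complex.norm_exp_ofReal_mul_I, Complex.norm_I]
  simpa using norm_sigma_le ξ

lemma norm_mminus_le (ξ : ℝ) : ‖mminus ξ‖ ≤ 1 := by
  have h : -((π : ℂ) * (ξ : ℂ) * Complex.I) = ((-(π * ξ) : ℝ) : ℂ) * Complex.I := by
    push_cast; ring
  rw [mminus, norm_mul, norm_mul, h,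
    Complex.norm_exp_ofReal_mul_I, Complex.norm_I]
  simpa using norm_sigma_le ξ

lemma II_aux (g : ℝ → ℂ)
    (hmeas : AEStronglyMeasurable g (volume.restrict (Set.uIoc (-(1:ℝ)/2) (1/2))))
    (C : ℝ) (hb : ∀ ξ, ‖g ξ‖ ≤ C) :
    IntervalIntegrable g volume (-(1:ℝ)/2) (1/2) := by
  refine (_root_.intervalIntegrable_const (c := C)).mono_fun hmeas ?_
  exact Filter.Eventually.of_forall fun ξ => by
    simpa [Real.norm_eq_abs] using (hb ξ).trans (le_abs_self C)

open Metric in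
lemma key_deriv (g : ℝ → ℂ) (hmeas : Measurable g) (C : ℝ)
    (hb : ∀ ξ, ‖g ξ‖ ≤ C) (y : ℝ) (hy : 0 < y) :
    IntervalIntegrable (fun ξ => ((-(2 * |Real.sin (π * ξ)|) : ℝ) : ℂ) *
        (g ξ * Complex.exp (((-(2 * |Real.sin (π * ξ)| * y)) : ℝ) : ℂ)))
        volume (-(1:ℝ)/2) (1/2) ∧
    HasDerivAt (fun t : ℝ => ∫ ξ in (-(1:ℝ)/2)..(1/2),
        g ξ * Complex.exp (((-(2 * |Real.sin (π * ξ)| * t)) : ℝ) : ℂ))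
      (∫ ξ in (-(1:ℝ)/2)..(1/2),
        ((-(2 * |Real.sin (π * ξ)|) : ℝ) : ℂ) *
          (g ξ * Complex.exp (((-(2 * |Real.sin (π * ξ)| * y)) : ℝ) : ℂ))) y := by
  have hC : 0 ≤ C := (norm_nonneg _).trans (hb 0)
  have hker : ∀ t : ℝ, Measurable fun ξ : ℝ =>
      Complex.exp (((-(2 * |Real.sin (π * ξ)| * t)) : ℝ) : ℂ) := by
    intro t; fun_prop
  have hFmeas : ∀ t : ℝ, AEStronglyMeasurable
      (fun ξ => g ξ * Complex.exp (((-(2 * |Real.sin (π * ξ)| * t)) : ℝ) : ℂ))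
      (volume.restrict (Set.uIoc (-(1:ℝ)/2) (1/2))) :=
    fun t => (hmeas.mul (hker t)).aestronglyMeasurable
  have hnorm : ∀ (t : ℝ), 0 ≤ t → ∀ ξ : ℝ,
      ‖g ξ * Complex.exp (((-(2 * |Real.sin (π * ξ)| * t)) : ℝ) : ℂ)‖ ≤ C := by
    intro t ht ξ
    rw [norm_mul, Complex.norm_exp]
    have h1 : Real.exp ((((-(2 * |Real.sin (π * ξ)| * t)) : ℝ) : ℂ)).re ≤ 1 := by
      rw [Complex.ofReal_re, Real.exp_le_one_iff]
      have := abs_nonneg (Real.sin (π * ξ))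
      nlinarith
    calc ‖g ξ‖ * Real.exp _ ≤ C * 1 :=
          mul_le_mul (hb ξ) h1 (Real.exp_nonneg _) hC
      _ = C := mul_one C
  have h := intervalIntegral.hasDerivAt_integral_of_dominated_loc_of_deriv_le
    (F := fun t ξ => g ξ * Complex.exp (((-(2 * |Real.sin (π * ξ)| * t)) : ℝ) : ℂ))
    (F' := fun t ξ => ((-(2 * |Real.sin (π * ξ)|) : ℝ) : ℂ) *
        (g ξ * Complex.exp (((-(2 * |Real.sin (π * ξ)| * t)) : ℝ) : ℂ)))
    (bound := fun _ => 2 * C) (s := ball y y) (ball_mem_nhds y hy)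
    (Filter.Eventually.of_forall fun t => hFmeas t)
    (II_aux _ (hFmeas y) C (hnorm y hy.le))
    ((((Complex.measurable_ofReal.comp (by fun_prop)).mul
      (hmeas.mul (hker y)))).aestronglyMeasurable)
    ?_ (_root_.intervalIntegrable_const) ?_
  · exact ⟨h.1, h.2⟩
  · refine Filter.Eventually.of_forall fun ξ _ t ht => ?_
    have ht0 : 0 < t := by
      rw [mem_ball, Real.dist_eq, abs_lt] at ht; linarith [ht.1]
    rw [norm_mul]
    have h2 : ‖(((-(2 * |Real.sin (π * ξ)|)) : ℝ) : ℂ)‖ ≤ 2 := by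
      rw [Complex.norm_real, Real.norm_eq_abs, abs_neg]
      have h3 : |Real.sin (π * ξ)| ≤ 1 := Real.abs_sin_le_one _
      have h4 : (0:ℝ) ≤ |Real.sin (π * ξ)| := abs_nonneg _
      rw [abs_of_nonneg (by positivity)]
      linarith
    exact mul_le_mul h2 (hnorm t ht0.le ξ) (norm_nonneg _) (by norm_num)
  · refine Filter.Eventually.of_forall fun ξ _ t _ => ?_
    have h0 : HasDerivAt (fun u : ℝ => (((-(2 * |Real.sin (π * ξ)|)):ℝ):ℂ) * (u:ℂ))
        ((((-(2 * |Real.sin (π * ξ)|)):ℝ):ℂ)) t := by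
      simpa using (Complex.ofRealCLM.hasDerivAt (x := t)).const_mul
        ((((-(2 * |Real.sin (π * ξ)|)):ℝ):ℂ))
    have h1 := (h0.cexp).const_mul (g ξ)
    have harg : ∀ u : ℝ, (((-(2 * |Real.sin (π * ξ)| * u)) : ℝ) : ℂ)
        = (((-(2 * |Real.sin (π * ξ)|)):ℝ):ℂ) * (u:ℂ) := by
      intro u; push_cast; ring
    have hfun : (fun u : ℝ =>
        g ξ * Complex.exp ((((-(2 * |Real.sin (π * ξ)|)):ℝ):ℂ) * (u:ℂ)))
        = fun u : ℝ => g ξ * Complex.exp (((-(2 * |Real.sin (π * ξ)| * u)) : ℝ) : ℂ) := by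
      funext u; rw [harg u]
    rw [hfun] at h1
    convert h1 using 1
    · rfl
    · rw [harg t]; ring

/-- Abstract form of the first symbol identity. -/
lemma key1 (a σ S T : ℂ) (ha : a ≠ 0) (hσT : σ * T = S)
    (hS' : S * (2 * a) = (1 - a ^ 2) * Complex.I) :
    -(2 * T) * (Complex.I * a * σ + Complex.I * a⁻¹ * σ) / 2
      = -((a * a - a⁻¹ * a⁻¹) / 2) := by
  have hS : S = (1 - a ^ 2) * Complex.I / (2 * a) := by
    rw [eq_div_iff (mul_ne_zero two_ne_zero ha)]; exact hS'
  rw [show -(2 * T) * (Complex.I * a * σ + Complex.I * a⁻¹ * σ) / 2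
      = -(σ * T) * Complex.I * (a + a⁻¹) by ring, hσT, hS,
    show -((1 - a ^ 2) * Complex.I / (2 * a)) * Complex.I * (a + a⁻¹)
      = -((1 - a ^ 2) * (Complex.I * Complex.I) / (2 * a)) * (a + a⁻¹) by ring,
    Complex.I_mul_I]
  field_simp
  ring

/-- Abstract form of the second symbol identity. -/
lemma key2 (a σ S T : ℂ) (ha : a ≠ 0)
    (hσS : σ * S = T) (hS' : S * (2 * a) = (1 - a ^ 2) * Complex.I) :
    (Complex.I * a * σ + Complex.I * a⁻¹ * σ) / 2 * ((a * a - a⁻¹ * a⁻¹) / 2)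
      = ((1/4 : ℂ) * (a * a) + 1/2 + (1/4) * (a⁻¹ * a⁻¹)) * (-(2 * T)) := by
  have hS : S = (1 - a ^ 2) * Complex.I / (2 * a) := by
    rw [eq_div_iff (mul_ne_zero two_ne_zero ha)]; exact hS'
  rw [← hσS, hS]
  field_simp
  ring

/-- Centered Cauchy–Riemann relations: `∂_y v = -∂⁰_x u` and
`∂⁰_x v = ((1/4)S_{-1} + (1/2)Id + (1/4)S_{+1}) ∂_y u`,
where `∂⁰_x` is the centered difference and `(S_{±1}g)(x) = g(x ∓ 1)`. -/
theorem centered_cauchy_riemann (f : ℤ → ℂ) (hf : Summable fun x => ‖f x‖)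
    (y : ℝ) (hy : 0 < y) (x : ℤ) :
    deriv (fun t => vcent f t x) y = -((poisson f y (x + 1) - poisson f y (x - 1)) / 2) ∧
    (vcent f y (x + 1) - vcent f y (x - 1)) / 2 =
      (1 / 4) * deriv (fun t => poisson f t (x + 1)) y +
      (1 / 2) * deriv (fun t => poisson f t x) y +
      (1 / 4) * deriv (fun t => poisson f t (x - 1)) y := by
  have hC0 : ∀ ξ, ‖dft f ξ‖ ≤ ∑' x : ℤ, ‖f x‖ := norm_dft_le f hf
  set C : ℝ := ∑' x : ℤ, ‖f x‖ with hC
  have hkernel : ∀ ξ : ℝ,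
      ‖Complex.exp (((-(2 * |Real.sin (π * ξ)| * y)) : ℝ) : ℂ)‖ ≤ 1 := by
    intro ξ
    rw [Complex.norm_exp, Complex.ofReal_re, Real.exp_le_one_iff]
    have := abs_nonneg (Real.sin (π * ξ))
    nlinarith
  -- derivative data for the Poisson extension
  have hP : ∀ x' : ℤ,
      IntervalIntegrable (fun ξ => ((-(2 * |Real.sin (π * ξ)|) : ℝ) : ℂ) *
        ((dft f ξ * Ex x' ξ) *
          Complex.exp (((-(2 * |Real.sin (π * ξ)| * y)) : ℝ) : ℂ)))
        volume (-(1:ℝ)/2) (1/2) ∧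
      HasDerivAt (fun t => poisson f t x')
        (∫ ξ in (-(1:ℝ)/2)..(1/2), ((-(2 * |Real.sin (π * ξ)|) : ℝ) : ℂ) *
          ((dft f ξ * Ex x' ξ) *
            Complex.exp (((-(2 * |Real.sin (π * ξ)| * y)) : ℝ) : ℂ))) y := by
    intro x'
    have hm : Measurable fun ξ => dft f ξ * Ex x' ξ :=
      ((continuous_dft f hf).mul (continuous_Ex x')).measurable
    have hb : ∀ ξ, ‖dft f ξ * Ex x' ξ‖ ≤ C := fun ξ => by
      rw [norm_mul, norm_Ex, mul_one]; exact hC0 ξ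
    have hkey := key_deriv _ hm C hb y hy
    refine ⟨hkey.1, ?_⟩
    have hfun : (fun t => poisson f t x') = fun t : ℝ => ∫ ξ in (-(1:ℝ)/2)..(1/2),
        (dft f ξ * Ex x' ξ) *
          Complex.exp (((-(2 * |Real.sin (π * ξ)| * t)) : ℝ) : ℂ) := by
      funext t
      simp only [poisson]
      exact intervalIntegral.integral_congr fun ξ _ => by simp only [Ex]; ring
    rw [hfun]
    exact hkey.2
  -- derivative data for v⁺ and v⁻
  have hV : ∀ m : ℝ → ℂ, Measurable m → (∀ ξ, ‖m ξ‖ ≤ 1) → ∀ x' : ℤ,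
      (∀ V : ℝ → ℤ → ℂ, (∀ t x'', V t x'' = ∫ ξ in (-(1:ℝ)/2)..(1/2),
          m ξ * dft f ξ * Complex.exp (((-(2 * |Real.sin (π * ξ)| * t)) : ℝ) : ℂ) *
            Complex.exp (2 * (π : ℂ) * Complex.I * (x'' : ℂ) * (ξ : ℂ))) →
        IntervalIntegrable (fun ξ => ((-(2 * |Real.sin (π * ξ)|) : ℝ) : ℂ) *
          ((m ξ * dft f ξ * Ex x' ξ) *
            Complex.exp (((-(2 * |Real.sin (π * ξ)| * y)) : ℝ) : ℂ)))
          volume (-(1:ℝ)/2) (1/2) ∧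
        HasDerivAt (fun t => V t x')
          (∫ ξ in (-(1:ℝ)/2)..(1/2), ((-(2 * |Real.sin (π * ξ)|) : ℝ) : ℂ) *
            ((m ξ * dft f ξ * Ex x' ξ) *
              Complex.exp (((-(2 * |Real.sin (π * ξ)| * y)) : ℝ) : ℂ))) y) := by
    intro m hmm hmb x' V hVdef
    have hCpos : 0 ≤ C := le_trans (norm_nonneg _) (hC0 0)
    have hm : Measurable fun ξ => m ξ * dft f ξ * Ex x' ξ :=
      (hmm.mul (continuous_dft f hf).measurable).mul (continuous_Ex x').measurable
    have hb : ∀ ξ, ‖m ξ * dft f ξ * Ex x' ξ‖ ≤ C := fun ξ => by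
      rw [norm_mul, norm_mul, norm_Ex, mul_one]
      calc ‖m ξ‖ * ‖dft f ξ‖ ≤ 1 * C :=
            mul_le_mul (hmb ξ) (hC0 ξ) (norm_nonneg _) one_pos.le
        _ = C := one_mul C
    have hkey := key_deriv _ hm C hb y hy
    refine ⟨hkey.1, ?_⟩
    have hfun : (fun t => V t x') = fun t : ℝ => ∫ ξ in (-(1:ℝ)/2)..(1/2),
        (m ξ * dft f ξ * Ex x' ξ) *
          Complex.exp (((-(2 * |Real.sin (π * ξ)| * t)) : ℝ) : ℂ) := by
      funext t
      rw [hVdef t x']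
      exact intervalIntegral.integral_congr fun ξ _ => by simp only [Ex]; ring
    rw [hfun]
    exact hkey.2
  have hVp : ∀ x' : ℤ, _ := fun x' : ℤ =>
    hV mplus measurable_mplus norm_mplus_le x' (vplus f) (fun t x'' => rfl)
  have hVm : ∀ x' : ℤ, _ := fun x' : ℤ =>
    hV mminus measurable_mminus norm_mminus_le x' (vminus f) (fun t x'' => rfl)
  -- interval integrability of the plain integrands at time y
  have hIIp : ∀ x' : ℤ, IntervalIntegrable (fun ξ =>
      dft f ξ * Complex.exp (((-(2 * |Real.sin (π * ξ)| * y)) : ℝ) : ℂ) *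
        Complex.exp (2 * (π : ℂ) * Complex.I * (x' : ℂ) * (ξ : ℂ)))
      volume (-(1:ℝ)/2) (1/2) := by
    intro x'
    refine II_aux _ ?_ C fun ξ => ?_
    · exact (((continuous_dft f hf).measurable.mul (by fun_prop)).mul
        (continuous_Ex x').measurable).aestronglyMeasurable
    · rw [norm_mul, norm_mul]
      have := norm_Ex x' ξ
      rw [Ex] at this
      rw [this, mul_one]
      calc ‖dft f ξ‖ * ‖_‖ ≤ C * 1 :=
            mul_le_mul (hC0 ξ) (hkernel ξ) (norm_nonneg _) (le_trans (norm_nonneg _) (hC0 0))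
        _ = C := mul_one C
  have hIIv : ∀ (m : ℝ → ℂ), Measurable m → (∀ ξ, ‖m ξ‖ ≤ 1) → ∀ x' : ℤ,
      IntervalIntegrable (fun ξ =>
        m ξ * dft f ξ * Complex.exp (((-(2 * |Real.sin (π * ξ)| * y)) : ℝ) : ℂ) *
          Complex.exp (2 * (π : ℂ) * Complex.I * (x' : ℂ) * (ξ : ℂ)))
        volume (-(1:ℝ)/2) (1/2) := by
    intro m hmm hmb x'
    refine II_aux _ ?_ C fun ξ => ?_
    · exact (((hmm.mul (continuous_dft f hf).measurable).mul (by fun_prop)).mul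
        (continuous_Ex x').measurable).aestronglyMeasurable
    · rw [norm_mul, norm_mul, norm_mul]
      have := norm_Ex x' ξ
      rw [Ex] at this
      rw [this, mul_one]
      calc ‖m ξ‖ * ‖dft f ξ‖ * ‖_‖ ≤ 1 * C * 1 := by
            refine mul_le_mul (mul_le_mul (hmb ξ) (hC0 ξ) (norm_nonneg _) one_pos.le)
              (hkernel ξ) (norm_nonneg _) ?_
            have : (0:ℝ) ≤ C := le_trans (norm_nonneg _) (hC0 0)
            linarith
        _ = C := by ring
  constructor
  · -- first relation
    have hD : HasDerivAt (fun t => vcent f t x) _ y :=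
      HasDerivAt.div_const (HasDerivAt.add (hVp x).2 (hVm x).2) 2
    rw [hD.deriv]
    simp only [poisson]
    rw [← intervalIntegral.integral_add (hVp x).1 (hVm x).1,
      ← intervalIntegral.integral_sub (hIIp (x+1)) (hIIp (x-1)),
      ← intervalIntegral.integral_div, ← intervalIntegral.integral_div,
      ← intervalIntegral.integral_neg]
    refine intervalIntegral.integral_congr fun ξ _ => ?_
    simp only [mplus, mminus, Ex]
    have ha : Complex.exp ((π : ℂ) * (ξ:ℝ) * Complex.I) ≠ 0 := Complex.exp_ne_zero _
    have hEm : Complex.exp (-((π : ℂ) * (ξ:ℝ) * Complex.I))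
        = (Complex.exp ((π : ℂ) * (ξ:ℝ) * Complex.I))⁻¹ := Complex.exp_neg _
    have hE1 : Complex.exp (2 * (π : ℂ) * Complex.I * ((x + 1 : ℤ) : ℂ) * (ξ:ℝ))
        = Complex.exp (2 * (π : ℂ) * Complex.I * (x : ℂ) * (ξ:ℝ)) *
          Complex.exp ((π : ℂ) * (ξ:ℝ) * Complex.I) *
          Complex.exp ((π : ℂ) * (ξ:ℝ) * Complex.I) := by
      rw [← Complex.exp_add, ← Complex.exp_add]; congr 1; push_cast; ring
    have hE2 : Complex.exp (2 * (π : ℂ) * Complex.I * ((x - 1 : ℤ) : ℂ) * (ξ:ℝ))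
        = Complex.exp (2 * (π : ℂ) * Complex.I * (x : ℂ) * (ξ:ℝ)) *
          (Complex.exp ((π : ℂ) * (ξ:ℝ) * Complex.I))⁻¹ *
          (Complex.exp ((π : ℂ) * (ξ:ℝ) * Complex.I))⁻¹ := by
      rw [← Complex.exp_neg, ← Complex.exp_add, ← Complex.exp_add]
      congr 1; push_cast; ring
    have hcast1 : ((Real.sin (π * ξ) / |Real.sin (π * ξ)| : ℝ) : ℂ)
        = (Real.sin (π * ξ) : ℂ) / ((|Real.sin (π * ξ)| : ℝ) : ℂ) := by push_cast; ring
    have hcast2 : ((-(2 * |Real.sin (π * ξ)|) : ℝ) : ℂ)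
        = -(2 * ((|Real.sin (π * ξ)| : ℝ) : ℂ)) := by push_cast; ring
    have hσT : (Real.sin (π * ξ) : ℂ) / ((|Real.sin (π * ξ)| : ℝ) : ℂ) *
        ((|Real.sin (π * ξ)| : ℝ) : ℂ) = (Real.sin (π * ξ) : ℂ) := by
      have h : Real.sin (π * ξ) / |Real.sin (π * ξ)| * |Real.sin (π * ξ)|
          = Real.sin (π * ξ) := by
        rcases eq_or_ne (Real.sin (π * ξ)) 0 with h | h
        · simp [h]
        · exact div_mul_cancel₀ _ (abs_ne_zero.2 h)
      exact_mod_cast h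
    have hσS : (Real.sin (π * ξ) : ℂ) / ((|Real.sin (π * ξ)| : ℝ) : ℂ) *
        (Real.sin (π * ξ) : ℂ) = ((|Real.sin (π * ξ)| : ℝ) : ℂ) := by
      have h : Real.sin (π * ξ) / |Real.sin (π * ξ)| * Real.sin (π * ξ)
          = |Real.sin (π * ξ)| := by
        rcases eq_or_ne (Real.sin (π * ξ)) 0 with h | h
        · simp [h]
        · rw [div_mul_eq_mul_div, ← abs_mul_abs_self, mul_div_assoc,
            div_self (abs_ne_zero.2 h), mul_one]
      exact_mod_cast h
    have hS : (Real.sin (π * ξ) : ℂ)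
        = ((Complex.exp ((π : ℂ) * (ξ:ℝ) * Complex.I))⁻¹ -
            Complex.exp ((π : ℂ) * (ξ:ℝ) * Complex.I)) * Complex.I / 2 := by
      rw [Complex.ofReal_sin]
      have h2 := Complex.two_sin (x := ((π * ξ : ℝ) : ℂ))
      have e1 : Complex.exp (-((π * ξ : ℝ) : ℂ) * Complex.I)
          = (Complex.exp ((π : ℂ) * (ξ:ℝ) * Complex.I))⁻¹ := by
        rw [← Complex.exp_neg]; congr 1; push_cast; ring
      have e2 : Complex.exp (((π * ξ : ℝ) : ℂ) * Complex.I)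
          = Complex.exp ((π : ℂ) * (ξ:ℝ) * Complex.I) := by
        congr 1; push_cast; ring
      rw [e1, e2] at h2
      push_cast at h2 ⊢
      linear_combination h2 / 2
    have hS' : (Real.sin (π * ξ) : ℂ) * (2 * Complex.exp ((π : ℂ) * (ξ:ℝ) * Complex.I))
        = (1 - (Complex.exp ((π : ℂ) * (ξ:ℝ) * Complex.I)) ^ 2) * Complex.I := by
      rw [hS]; field_simp
    rw [hcast1, hcast2, hE1, hE2, hEm]
    linear_combination (dft f ξ * Complex.exp (2 * (π : ℂ) * Complex.I * (x : ℂ) * (ξ:ℝ)) *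
        Complex.exp (((-(2 * |Real.sin (π * ξ)| * y)) : ℝ) : ℂ)) *
      key1 (Complex.exp ((π : ℂ) * (ξ:ℝ) * Complex.I))
        ((Real.sin (π * ξ) : ℂ) / ((|Real.sin (π * ξ)| : ℝ) : ℂ))
        (Real.sin (π * ξ) : ℂ) ((|Real.sin (π * ξ)| : ℝ) : ℂ) ha hσT hS'
  · -- second relation
    rw [(hP (x+1)).2.deriv, (hP x).2.deriv, (hP (x-1)).2.deriv]
    simp only [vcent, vplus, vminus]
    rw [← intervalIntegral.integral_add (hIIv mplus measurable_mplus norm_mplus_le (x+1))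
        (hIIv mminus measurable_mminus norm_mminus_le (x+1)),
      ← intervalIntegral.integral_add (hIIv mplus measurable_mplus norm_mplus_le (x-1))
        (hIIv mminus measurable_mminus norm_mminus_le (x-1)),
      ← intervalIntegral.integral_div, ← intervalIntegral.integral_div,
      ← intervalIntegral.integral_sub (IntervalIntegrable.div_const
          (IntervalIntegrable.add (hIIv mplus measurable_mplus norm_mplus_le (x+1))
            (hIIv mminus measurable_mminus norm_mminus_le (x+1))) 2)
        (IntervalIntegrable.div_const
          (IntervalIntegrable.add (hIIv mplus measurable_mplus norm_mplus_le (x-1))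
            (hIIv mminus measurable_mminus norm_mminus_le (x-1))) 2),
      ← intervalIntegral.integral_div,
      ← intervalIntegral.integral_const_mul, ← intervalIntegral.integral_const_mul,
      ← intervalIntegral.integral_const_mul,
      ← intervalIntegral.integral_add ((hP (x+1)).1.const_mul _) ((hP x).1.const_mul _),
      ← intervalIntegral.integral_add
        (((hP (x+1)).1.const_mul _).add ((hP x).1.const_mul _)) ((hP (x-1)).1.const_mul _)]
    refine intervalIntegral.integral_congr fun ξ _ => ?_
    simp only [mplus, mminus, Ex]
    have ha : Complex.exp ((π : ℂ) * (ξ:ℝ) * Complex.I) ≠ 0 := Complex.exp_ne_zero _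
    have hEm : Complex.exp (-((π : ℂ) * (ξ:ℝ) * Complex.I))
        = (Complex.exp ((π : ℂ) * (ξ:ℝ) * Complex.I))⁻¹ := Complex.exp_neg _
    have hE1 : Complex.exp (2 * (π : ℂ) * Complex.I * ((x + 1 : ℤ) : ℂ) * (ξ:ℝ))
        = Complex.exp (2 * (π : ℂ) * Complex.I * (x : ℂ) * (ξ:ℝ)) *
          Complex.exp ((π : ℂ) * (ξ:ℝ) * Complex.I) *
          Complex.exp ((π : ℂ) * (ξ:ℝ) * Complex.I) := by
      rw [← Complex.exp_add, ← Complex.exp_add]; congr 1; push_cast; ring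
    have hE2 : Complex.exp (2 * (π : ℂ) * Complex.I * ((x - 1 : ℤ) : ℂ) * (ξ:ℝ))
        = Complex.exp (2 * (π : ℂ) * Complex.I * (x : ℂ) * (ξ:ℝ)) *
          (Complex.exp ((π : ℂ) * (ξ:ℝ) * Complex.I))⁻¹ *
          (Complex.exp ((π : ℂ) * (ξ:ℝ) * Complex.I))⁻¹ := by
      rw [← Complex.exp_neg, ← Complex.exp_add, ← Complex.exp_add]
      congr 1; push_cast; ring
    have hcast1 : ((Real.sin (π * ξ) / |Real.sin (π * ξ)| : ℝ) : ℂ)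
        = (Real.sin (π * ξ) : ℂ) / ((|Real.sin (π * ξ)| : ℝ) : ℂ) := by push_cast; ring
    have hcast2 : ((-(2 * |Real.sin (π * ξ)|) : ℝ) : ℂ)
        = -(2 * ((|Real.sin (π * ξ)| : ℝ) : ℂ)) := by push_cast; ring
    have hσT : (Real.sin (π * ξ) : ℂ) / ((|Real.sin (π * ξ)| : ℝ) : ℂ) *
        ((|Real.sin (π * ξ)| : ℝ) : ℂ) = (Real.sin (π * ξ) : ℂ) := by
      have h : Real.sin (π * ξ) / |Real.sin (π * ξ)| * |Real.sin (π * ξ)|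
          = Real.sin (π * ξ) := by
        rcases eq_or_ne (Real.sin (π * ξ)) 0 with h | h
        · simp [h]
        · exact div_mul_cancel₀ _ (abs_ne_zero.2 h)
      exact_mod_cast h
    have hσS : (Real.sin (π * ξ) : ℂ) / ((|Real.sin (π * ξ)| : ℝ) : ℂ) *
        (Real.sin (π * ξ) : ℂ) = ((|Real.sin (π * ξ)| : ℝ) : ℂ) := by
      have h : Real.sin (π * ξ) / |Real.sin (π * ξ)| * Real.sin (π * ξ)
          = |Real.sin (π * ξ)| := by
        rcases eq_or_ne (Real.sin (π * ξ)) 0 with h | h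
        · simp [h]
        · rw [div_mul_eq_mul_div, ← abs_mul_abs_self, mul_div_assoc,
            div_self (abs_ne_zero.2 h), mul_one]
      exact_mod_cast h
    have hS : (Real.sin (π * ξ) : ℂ)
        = ((Complex.exp ((π : ℂ) * (ξ:ℝ) * Complex.I))⁻¹ -
            Complex.exp ((π : ℂ) * (ξ:ℝ) * Complex.I)) * Complex.I / 2 := by
      rw [Complex.ofReal_sin]
      have h2 := Complex.two_sin (x := ((π * ξ : ℝ) : ℂ))
      have e1 : Complex.exp (-((π * ξ : ℝ) : ℂ) * Complex.I)
          = (Complex.exp ((π : ℂ) * (ξ:ℝ) * Complex.I))⁻¹ := by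
        rw [← Complex.exp_neg]; congr 1; push_cast; ring
      have e2 : Complex.exp (((π * ξ : ℝ) : ℂ) * Complex.I)
          = Complex.exp ((π : ℂ) * (ξ:ℝ) * Complex.I) := by
        congr 1; push_cast; ring
      rw [e1, e2] at h2
      push_cast at h2 ⊢
      linear_combination h2 / 2
    have hS' : (Real.sin (π * ξ) : ℂ) * (2 * Complex.exp ((π : ℂ) * (ξ:ℝ) * Complex.I))
        = (1 - (Complex.exp ((π : ℂ) * (ξ:ℝ) * Complex.I)) ^ 2) * Complex.I := by
      rw [hS]; field_simp
    rw [hcast1, hcast2, hE1, hE2, hEm]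
    linear_combination (dft f ξ * Complex.exp (2 * (π : ℂ) * Complex.I * (x : ℂ) * (ξ:ℝ)) *
        Complex.exp (((-(2 * |Real.sin (π * ξ)| * y)) : ℝ) : ℂ)) *
      key2 (Complex.exp ((π : ℂ) * (ξ:ℝ) * Complex.I))
        ((Real.sin (π * ξ) : ℂ) / ((|Real.sin (π * ξ)| : ℝ) : ℂ))
        (Real.sin (π * ξ) : ℂ) ((|Real.sin (π * ξ)| : ℝ) : ℂ) ha hσS hS'
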